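/- Let m ≥ 1, let T be an invertible m×m complex matrix, set |T| := (T*T)^{1/2} and U := T·|T|⁻¹ (so T = U|T| is the polar decomposition with U unitary). Then (U|T| + |T|U)/2 = T if and only if T is normal (i.e., T*T = TT*). -/

import Mathlib

/-!
Write `P = |T|`, so that `T = UP` with `U = TP⁻¹`. Since `UP = T`, the mean transform equals `T`
exactly when `PTP⁻¹ = T`, i.e. when `P` commutes with `T`. If it does, then so does `P² = T*T`,
and cancelling the invertible `T` from `T*T·T = T·T*T` gives normality. Conversely, for normal `T`
the matrix `T` commutes with `T*T`, hence with every continuous function of it, in particular with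
its square root `P`.
-/

open Matrix
open scoped ComplexOrder

/-- The square root of a positive semidefinite matrix, as defined in Mathlib (Dec 2024). -/
noncomputable def Matrix.PosSemidef.sqrt {𝕜 : Type*} [RCLike 𝕜] {n : Type*} [Fintype n]
    [DecidableEq n] {A : Matrix n n 𝕜} (hA : A.PosSemidef) : Matrix n n 𝕜 :=
  (hA.1.eigenvectorUnitary : Matrix n n 𝕜) * diagonal (((↑) : ℝ → 𝕜) ∘ (√·) ∘ hA.1.eigenvalues) *
    (star hA.1.eigenvectorUnitary : Matrix n n 𝕜)

open scoped MatrixOrder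

lemma Matrix.PosSemidef.sqrt_eq_cfcSqrt {𝕜 : Type*} [RCLike 𝕜] {n : Type*} [Fintype n]
    [DecidableEq n] {A : Matrix n n 𝕜} (hA : A.PosSemidef) : hA.sqrt = CFC.sqrt A := by
  rw [CFC.sqrt_eq_cfc, cfc_nnreal_eq_real _ A, hA.1.cfc_eq]
  simp only [IsHermitian.cfc, Matrix.PosSemidef.sqrt, Unitary.conjStarAlgAut_apply, Real.coe_sqrt,
    Real.coe_toNNReal']
  congr 3
  funext i
  simp [hA.eigenvalues_nonneg i]

section MeanTransform

variable (K : Type*) {A : Type*} [DivisionRing K] [Ring A] [Module K A]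

/-- The mean transform of `T = u * p`, for the polar factors `u` and `p = |T|`. -/
def meanTransform (u p : A) : A :=
  (2 : K)⁻¹ • (u * p + p * u)

variable {K}

theorem meanTransform_mul_inv_eq_self_iff_commute [NeZero (2 : K)] {t p q : A}
    (hqp : q * p = 1) (hpq : p * q = 1) : meanTransform K (t * q) p = t ↔ Commute p t := by
  have hUP : t * q * p = t := by rw [mul_assoc, hqp, mul_one]
  calc meanTransform K (t * q) p = t ↔ t + p * (t * q) = t + t := by
        rw [meanTransform, hUP, inv_smul_eq_iff₀ two_ne_zero, two_smul]
    _ ↔ p * (t * q) = t := add_right_inj t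
    _ ↔ p * t = t * p := by
        constructor
        · intro h
          conv_rhs => rw [← h]
          rw [mul_assoc, mul_assoc, hqp, mul_one]
        · intro h
          rw [← mul_assoc, h, mul_assoc, hpq, mul_one]

end MeanTransform

theorem isStarNormal_of_commute_of_mul_self_eq {A : Type*} [Monoid A] [Star A] {a p : A}
    (ha : IsUnit a) (hp : p * p = star a * a) (hpa : Commute p a) : IsStarNormal a := by
  have hcomm : star a * a * a = a * (star a * a) := hp ▸ (hpa.mul_left hpa).eq
  exact ⟨ha.mul_right_cancel (by rw [hcomm, mul_assoc])⟩

section AbsoluteValue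

variable {A : Type*} [Ring A] [StarRing A] [Algebra ℝ A] [TopologicalSpace A] [PartialOrder A]
  [StarOrderedRing A] [NonnegSpectrumClass ℝ A] [ContinuousFunctionalCalculus ℝ A IsSelfAdjoint]
  [IsTopologicalRing A] [T2Space A]

theorem IsStarNormal.commute_sqrt_star_mul_self (a : A) [IsStarNormal a] :
    Commute (CFC.sqrt (star a * a)) a := by
  rw [CFC.sqrt_eq_cfc]
  exact (IsStarNormal.star_comm_self.mul_left (Commute.refl a)).cfc_nnreal _

theorem commute_sqrt_star_mul_self_iff_isStarNormal {a : A} (ha : IsUnit a) :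
    Commute (CFC.sqrt (star a * a)) a ↔ IsStarNormal a :=
  ⟨isStarNormal_of_commute_of_mul_self_eq ha (CFC.sqrt_mul_sqrt_self _ (star_mul_self_nonneg a)),
    fun _ ↦ IsStarNormal.commute_sqrt_star_mul_self a⟩

end AbsoluteValue

theorem stmt_4_general (m : ℕ) (T : Matrix (Fin m) (Fin m) ℂ) (hT : IsUnit T.det) :
    ((2 : ℂ)⁻¹ •
        (T * (Matrix.PosSemidef.sqrt (Matrix.posSemidef_conjTranspose_mul_self T))⁻¹ *
            Matrix.PosSemidef.sqrt (Matrix.posSemidef_conjTranspose_mul_self T) +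
          Matrix.PosSemidef.sqrt (Matrix.posSemidef_conjTranspose_mul_self T) *
            (T * (Matrix.PosSemidef.sqrt (Matrix.posSemidef_conjTranspose_mul_self T))⁻¹))) = T ↔
      Tᴴ * T = T * Tᴴ := by
  set P := (Matrix.posSemidef_conjTranspose_mul_self T).sqrt
  have hT' : IsUnit T := (isUnit_iff_isUnit_det T).mpr hT
  have hP : P = CFC.sqrt (star T * T) := PosSemidef.sqrt_eq_cfcSqrt _
  have hPdet : IsUnit P.det := by
    rw [← isUnit_iff_isUnit_det, hP, CFC.isUnit_sqrt_iff _ (star_mul_self_nonneg T)]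
    exact hT'.star.mul hT'
  change meanTransform ℂ (T * P⁻¹) P = T ↔ Commute (star T) T
  rw [meanTransform_mul_inv_eq_self_iff_commute (nonsing_inv_mul P hPdet)
    (mul_nonsing_inv P hPdet), hP, commute_sqrt_star_mul_self_iff_isStarNormal hT',
    isStarNormal_iff]

/-- For an invertible matrix `T` with polar decomposition `T = U|T|`
(`|T| = (T*T)^{1/2}`, `U = T|T|⁻¹`), the mean transformation satisfies
`(U|T| + |T|U)/2 = T` iff `T` is normal. -/
theorem stmt_4 (m : ℕ) (hm : 1 ≤ m) (T : Matrix (Fin m) (Fin m) ℂ) (hT : IsUnit T.det) :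
    ((2 : ℂ)⁻¹ •
        (T * (Matrix.PosSemidef.sqrt (Matrix.posSemidef_conjTranspose_mul_self T))⁻¹ *
            Matrix.PosSemidef.sqrt (Matrix.posSemidef_conjTranspose_mul_self T) +
          Matrix.PosSemidef.sqrt (Matrix.posSemidef_conjTranspose_mul_self T) *
            (T * (Matrix.PosSemidef.sqrt (Matrix.posSemidef_conjTranspose_mul_self T))⁻¹))) = T ↔
      Tᴴ * T = T * Tᴴ :=
  stmt_4_general m T hT
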